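/- The three-dimensional complex vector space V with basis {X1, X2, X3} equipped with the action of the complexified Diamond Lie algebra determined by (X1,J) = (2i/3)X1, (X2,J) = -(i/3)X2, (X3,J) = -(i/3)X3, (X1,P+) = X2, (X3,P-) = X1, (X3,T) = (i/2)X2 (all other basis actions zero) is a right module, i.e. (v·x)·y - (v·y)·x = v·[x,y] for all v in V and x,y in the Diamond algebra. -/
import Mathlib

/-- Bracket of the complexified Diamond Lie algebra in the basis `{J, P+, P-, T}`
(coordinates indexed `0,1,2,3`): `[J,P+]=iP+`, `[J,P-]=-iP-`, `[P+,P-]=2iT`. -/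
def diamondBracket (u v : Fin 4 → ℂ) : Fin 4 → ℂ :=
  ![0, Complex.I * (u 0 * v 1 - u 1 * v 0), -Complex.I * (u 0 * v 2 - u 2 * v 0),
    2 * Complex.I * (u 1 * v 2 - u 2 * v 1)]

/-- The action on `V = span{X1,X2,X3}` given by `(X1,J)=(2i/3)X1`, `(X2,J)=-(i/3)X2`,
`(X3,J)=-(i/3)X3`, `(X1,P+)=X2`, `(X3,P-)=X1`, `(X3,T)=(i/2)X2`, extended bilinearly. -/
noncomputable def actSl3 (w : Fin 3 → ℂ) (u : Fin 4 → ℂ) : Fin 3 → ℂ :=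
  ![(2 * Complex.I / 3) * w 0 * u 0 + w 2 * u 2,
    -(Complex.I / 3) * w 1 * u 0 + w 0 * u 1 + (Complex.I / 2) * w 2 * u 3,
    -(Complex.I / 3) * w 2 * u 0]

/-- The above action makes `V` a right module over the complexified Diamond Lie algebra:
`(v·x)·y - (v·y)·x = v·[x,y]`. -/
theorem actSl3_is_right_module :
    ∀ (w : Fin 3 → ℂ) (x y : Fin 4 → ℂ),
      actSl3 (actSl3 w x) y - actSl3 (actSl3 w y) x = actSl3 w (diamondBracket x y) := by
  intro w x y
  funext i
  fin_cases i <;>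
    simp only [actSl3, diamondBracket, Pi.sub_apply, Matrix.cons_val_zero,
      Matrix.cons_val_one, Matrix.head_cons, Matrix.cons_val_two, Matrix.tail_cons,
      Matrix.cons_val_three] <;>
    ring_nf <;>
    simp [Complex.I_sq] <;>
    ring
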